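/- arXiv:2407.02021 — 2 statements merged into one kernel-verified Lean document; each statement's English description precedes it below -/
import Mathlib

section
/- Let R be an LG-ring and let M be a faithfully projective R-module. Then M contains a unimodular element, i.e. there exists m ∈ M such that R·m is a free R-module of rank 1 and a direct summand of M; equivalently, there exist m ∈ M and an R-linear map φ : M → R with φ(m) = 1. -/
/-!
Write a finitely generated projective module through a dual basis: elements `e j` and linear
forms `φ i` with `x = ∑ φ i x • e i`. Faithfulness and Nakayama's lemma say that at every maximal
ideal `𝔪` some entry of the matrix `(φ i (e j))` is a unit modulo `𝔪`, so the bilinear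
polynomial `∑ φ i (e j) Xᵢ Yⱼ` represents a unit over every residue field. Over an LG-ring it
then represents a unit `u` at some `x, y`, and `m = ∑ yⱼ e j`, `φ = u⁻¹ ∑ xᵢ φ i` do the job.
-/

/-- A commutative ring `R` is an LG-ring ("local-global ring") if every multivariate
polynomial over `R` that represents a unit over every residue field `R/𝔪` at a maximal
ideal `𝔪` already represents a unit over `R`. -/
def IsLGRing (R : Type*) [CommRing R] : Prop :=
  ∀ n : ℕ, 1 ≤ n → ∀ f : MvPolynomial (Fin n) R,
    (∀ 𝔪 : Ideal R, 𝔪.IsMaximal →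
      ∃ v : Fin n → R ⧸ 𝔪, IsUnit (MvPolynomial.eval v
        (MvPolynomial.map (Ideal.Quotient.mk 𝔪) f))) →
    ∃ u : Fin n → R, IsUnit (MvPolynomial.eval u f)

open MvPolynomial Matrix

theorem IsLGRing.exists_isUnit_eval {R : Type*} [CommRing R] (hR : IsLGRing R)
    {σ : Type*} [Finite σ] (f : MvPolynomial σ R)
    (hf : ∀ 𝔪 : Ideal R, 𝔪.IsMaximal →
      ∃ v : σ → R ⧸ 𝔪, IsUnit (eval v (map (Ideal.Quotient.mk 𝔪) f))) :
    ∃ u : σ → R, IsUnit (eval u f) := by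
  -- the extra variable makes the number of variables positive even when `σ` is empty
  let e : σ → Fin (Nat.card σ + 1) := Fin.castSucc ∘ Finite.equivFin σ
  have he : e.Injective := (Fin.castSucc_injective _).comp (Finite.equivFin σ).injective
  obtain ⟨u, hu⟩ := hR _ (Nat.le_add_left 1 _) (rename e f) fun 𝔪 h𝔪 => by
    obtain ⟨v, hv⟩ := hf 𝔪 h𝔪
    exact ⟨Function.extend e v 0, by rwa [map_rename, eval_rename, Function.extend_comp he]⟩
  exact ⟨u ∘ e, by rwa [eval_rename] at hu⟩

namespace Matrix

variable {R S ι κ : Type*} [CommSemiring R] [CommSemiring S] [Fintype ι] [Fintype κ]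

noncomputable def bilinPoly (A : Matrix ι κ R) : MvPolynomial (ι ⊕ κ) R :=
  ∑ i, ∑ j, C (A i j) * X (.inl i) * X (.inr j)

theorem map_bilinPoly (A : Matrix ι κ R) (φ : R →+* S) :
    MvPolynomial.map φ A.bilinPoly = (A.map φ).bilinPoly := by
  simp [bilinPoly]

theorem eval_bilinPoly (A : Matrix ι κ R) (v : ι ⊕ κ → R) :
    eval v A.bilinPoly = (v ∘ .inl) ⬝ᵥ A *ᵥ (v ∘ .inr) := by
  simp [bilinPoly, dotProduct, mulVec, Finset.mul_sum, mul_comm, mul_left_comm]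

end Matrix

theorem IsLGRing.exists_isUnit_dotProduct_mulVec {R : Type*} [CommRing R] (hR : IsLGRing R)
    {ι κ : Type*} [Fintype ι] [Fintype κ] (A : Matrix ι κ R)
    (hA : ∀ 𝔪 : Ideal R, 𝔪.IsMaximal → ∃ i j, A i j ∉ 𝔪) :
    ∃ x y, IsUnit (x ⬝ᵥ A *ᵥ y) := by
  classical
  obtain ⟨u, hu⟩ := hR.exists_isUnit_eval A.bilinPoly fun 𝔪 h𝔪 => by
    let := Ideal.Quotient.field 𝔪
    obtain ⟨i, j, hij⟩ := hA 𝔪 h𝔪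
    refine ⟨Sum.elim (Pi.single i 1) (Pi.single j 1), ?_⟩
    rw [Matrix.map_bilinPoly, Matrix.eval_bilinPoly, Sum.elim_comp_inl, Sum.elim_comp_inr,
      Matrix.mulVec_single_one, single_one_dotProduct, isUnit_iff_ne_zero]
    simpa [Ideal.Quotient.eq_zero_iff_mem] using hij
  exact ⟨u ∘ .inl, u ∘ .inr, by rwa [Matrix.eval_bilinPoly] at hu⟩

theorem Module.Finite.exists_fin_sum_dual_smul_eq (R M : Type*) [CommSemiring R]
    [AddCommMonoid M] [Module R M] [Module.Finite R M] [Module.Projective R M] :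
    ∃ (n : ℕ) (e : Fin n → M) (φ : Fin n → Module.Dual R M), ∀ x, ∑ i, φ i x • e i = x := by
  obtain ⟨n, f, g, -, -, hfg⟩ := exists_comp_eq_id_of_projective R M
  refine ⟨n, fun i => f (Pi.single i 1), fun i => LinearMap.proj i ∘ₗ g, fun x => ?_⟩
  conv_rhs => rw [← LinearMap.id_apply (R := R) x, ← hfg, LinearMap.comp_apply,
    pi_eq_sum_univ' (g x), map_sum]
  simp

theorem Submodule.ideal_smul_top_ne_top {R M : Type*} [CommRing R] [AddCommGroup M] [Module R M]
    [Module.Finite R M] [FaithfulSMul R M] {I : Ideal R} (hI : I ≠ ⊤) :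
    I • (⊤ : Submodule R M) ≠ ⊤ := by
  intro h
  obtain ⟨r, hr1, hr0⟩ :=
    exists_sub_one_mem_and_smul_eq_zero_of_fg_of_le_smul I ⊤ Module.Finite.fg_top h.ge
  obtain rfl : r = 0 := eq_of_smul_eq_smul fun x => by rw [hr0 x mem_top, zero_smul]
  exact hI (I.eq_top_of_isUnit_mem (by simpa using I.neg_mem hr1) isUnit_one)

theorem Module.Dual.exists_apply_notMem_of_sum_smul_eq {R M : Type*} [CommRing R]
    [AddCommGroup M] [Module R M] {n : ℕ} {e : Fin n → M} {φ : Fin n → Module.Dual R M}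
    (hφ : ∀ x, ∑ i, φ i x • e i = x) {I : Ideal R} (hI : I • (⊤ : Submodule R M) ≠ ⊤) :
    ∃ i j, φ i (e j) ∉ I := by
  by_contra! hφI
  refine hI (eq_top_iff.2 fun x _ => hφ x ▸ sum_mem fun i _ => Submodule.smul_mem_smul ?_ Submodule.mem_top)
  rw [← hφ x, map_sum]
  exact sum_mem fun j _ => by simpa using I.mul_mem_left _ (hφI i j)

/-- A faithfully projective module `M` (finitely generated, projective and
faithful) over an LG-ring `R` contains a unimodular element: there are `m ∈ M` and a linear
form `φ : M → R` with `φ(m) = 1`. -/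
theorem lg_ring_faithfully_projective_exists_unimodular
    {R : Type*} [CommRing R] (hR : IsLGRing R)
    (M : Type*) [AddCommGroup M] [Module R M]
    [Module.Finite R M] [Module.Projective R M] [FaithfulSMul R M] :
    ∃ (m : M) (φ : M →ₗ[R] R), φ m = 1 := by
  obtain ⟨n, e, φ, hφ⟩ := Module.Finite.exists_fin_sum_dual_smul_eq R M
  let A : Matrix (Fin n) (Fin n) R := .of fun i j => φ i (e j)
  obtain ⟨x, y, hxy⟩ := hR.exists_isUnit_dotProduct_mulVec A fun 𝔪 h𝔪 =>
    Module.Dual.exists_apply_notMem_of_sum_smul_eq hφ (Submodule.ideal_smul_top_ne_top h𝔪.ne_top)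
  have hpair : (∑ i, x i • φ i) (∑ j, y j • e j) = x ⬝ᵥ A *ᵥ y := by
    simp [A, dotProduct, mulVec, Finset.mul_sum, mul_comm, mul_left_comm]
    exact Finset.sum_comm
  exact ⟨∑ j, y j • e j, (↑hxy.unit⁻¹ : R) • ∑ i, x i • φ i, by
    rw [LinearMap.smul_apply, hpair, smul_eq_mul, hxy.val_inv_mul]⟩
end

section
/- Let R be an LG-ring, let M₁ and M₂ be finitely generated projective R-modules, and let N be a faithfully projective R-module. If M₁ ⊗_R N and M₂ ⊗_R N are isomorphic as R-modules, then M₁ and M₂ are isomorphic as R-modules. In particular, for any n ≥ 1, if the direct sums of n copies M₁^{⊕n} and M₂^{⊕n} are isomorphic, then M₁ ≅ M₂. -/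
open TensorProduct

/-!
Present `Mᵢ` as a direct summand of `R^{mᵢ}` by `pᵢ ∘ sᵢ = 1`, with idempotent `Qᵢ = sᵢ ∘ pᵢ`.
Matrices `X`, `Y` give `φ = p₂ X s₁ : M₁ → M₂` and `ψ = p₁ Y s₂`, and the polynomial
`det (Q₁YQ₂XQ₁ + 1 - Q₁) · det (Q₂XQ₁YQ₂ + 1 - Q₂)` in the entries of `X`, `Y` is the product of
the determinants of `ψφ ⊕ 1` and `φψ ⊕ 1`; where it is a unit, `φ` is an isomorphism.
At a maximal ideal `𝔪` the fibre dimensions multiply and `N/𝔪N ≠ 0` (Nakayama), so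
`M₁/𝔪M₁ ≅ M₂/𝔪M₂`; lifting this isomorphism and its inverse to maps `M₁ ⇄ M₂` makes the
polynomial `≡ 1 mod 𝔪`. The LG property then yields `X`, `Y` over `R` at which it is a unit.
For `M₁ⁿ ≅ M₂ⁿ` take `N = Rⁿ`.
-/

namespace Matrix

variable {S T ι κ : Type*} [CommRing S] [CommRing T] [Fintype ι] [DecidableEq ι]
  [Fintype κ] [DecidableEq κ]

/-- `det (ψφ ⊕ 1) · det (φψ ⊕ 1)` for the maps `φ = Q₂XQ₁` and `ψ = Q₁YQ₂` between the ranges of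
the idempotents `Q₁` and `Q₂`. -/
def pairDet (Q₁ : Matrix ι ι S) (Q₂ : Matrix κ κ S) (X : Matrix κ ι S) (Y : Matrix ι κ S) : S :=
  (Q₁ * Y * Q₂ * X * Q₁ + 1 - Q₁).det * (Q₂ * X * Q₁ * Y * Q₂ + 1 - Q₂).det

lemma map_pairDet (f : S →+* T) (Q₁ : Matrix ι ι S) (Q₂ : Matrix κ κ S) (X : Matrix κ ι S)
    (Y : Matrix ι κ S) :
    f (pairDet Q₁ Q₂ X Y) = pairDet (Q₁.map f) (Q₂.map f) (X.map f) (Y.map f) := by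
  simp [pairDet, RingHom.map_det, Matrix.map_mul, Matrix.map_sub, Matrix.map_add, Matrix.map_one]

end Matrix

namespace IsLGRing

variable {R : Type*} [CommRing R]

theorem exists_isUnit_eval_s7 (hR : IsLGRing R) {σ : Type*} [Finite σ] (f : MvPolynomial σ R)
    (hf : ∀ 𝔪 : Ideal R, 𝔪.IsMaximal →
      ∃ v : σ → R ⧸ 𝔪, IsUnit (MvPolynomial.eval v (MvPolynomial.map (Ideal.Quotient.mk 𝔪) f))) :
    ∃ u : σ → R, IsUnit (MvPolynomial.eval u f) := by
  obtain ⟨n, ⟨e⟩⟩ := Finite.exists_equiv_fin σ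
  -- `IsLGRing` only speaks of polynomials in `n ≥ 1` variables, hence a dummy extra variable.
  let g : σ ↪ Fin (n + 1) := e.toEmbedding.trans Fin.castSuccEmb
  obtain ⟨u, hu⟩ := hR (n + 1) (Nat.le_add_left 1 n) (MvPolynomial.rename g f) fun 𝔪 h𝔪 => by
    obtain ⟨v, hv⟩ := hf 𝔪 h𝔪
    refine ⟨Function.extend g v 0, ?_⟩
    rwa [MvPolynomial.map_rename, MvPolynomial.eval_rename, Function.extend_comp g.injective]
  exact ⟨u ∘ g, by rwa [MvPolynomial.eval_rename] at hu⟩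

open MvPolynomial in
theorem exists_isUnit_pairDet (hR : IsLGRing R) {ι κ : Type*} [Fintype ι] [DecidableEq ι]
    [Fintype κ] [DecidableEq κ] (Q₁ : Matrix ι ι R) (Q₂ : Matrix κ κ R)
    (h : ∀ 𝔪 : Ideal R, 𝔪.IsMaximal → ∃ X Y,
      IsUnit (Matrix.pairDet (Q₁.map (Ideal.Quotient.mk 𝔪)) (Q₂.map (Ideal.Quotient.mk 𝔪)) X Y)) :
    ∃ X Y, IsUnit (Matrix.pairDet Q₁ Q₂ X Y) := by
  let χ : MvPolynomial (κ × ι ⊕ ι × κ) R := Matrix.pairDet (Q₁.map C) (Q₂.map C)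
    (.of fun i j => X (.inl (i, j))) (.of fun i j => X (.inr (i, j)))
  have hχ : ∀ {T : Type _} [CommRing T] (θ : R →+* T) (v : κ × ι ⊕ ι × κ → T),
      eval₂Hom θ v χ = Matrix.pairDet (Q₁.map θ) (Q₂.map θ)
        (.of fun i j => v (.inl (i, j))) (.of fun i j => v (.inr (i, j))) := by
    intro T _ θ v
    rw [Matrix.map_pairDet]
    congr 1 <;> ext <;> simp
  obtain ⟨u, hu⟩ := hR.exists_isUnit_eval_s7 χ fun 𝔪 h𝔪 => by
    obtain ⟨X, Y, hXY⟩ := h 𝔪 h𝔪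
    refine ⟨Sum.elim (fun q => X q.1 q.2) (fun q => Y q.1 q.2), ?_⟩
    rw [eval_map, ← coe_eval₂Hom, hχ]
    exact hXY
  change IsUnit (eval₂Hom (RingHom.id R) u χ) at hu
  rw [hχ, RingHom.coe_id, Matrix.map_id, Matrix.map_id] at hu
  exact ⟨_, _, hu⟩

end IsLGRing

namespace LinearMap

section Ring

variable {R M F : Type*} [Ring R] [AddCommGroup M] [Module R M] [AddCommGroup F] [Module R F]

/-- On `F = range s ⊕ ker p` this is `e ⊕ 1`. -/
def extendByOne (s : M →ₗ[R] F) (p : F →ₗ[R] M) (e : M →ₗ[R] M) : F →ₗ[R] F :=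
  s ∘ₗ e ∘ₗ p + (id - s ∘ₗ p)

variable {s : M →ₗ[R] F} {p : F →ₗ[R] M}

lemma extendByOne_apply_of_comp_eq_id (hps : p ∘ₗ s = id) (e : M →ₗ[R] M) (x : M) :
    extendByOne s p e (s x) = s (e x) := by
  simp [extendByOne, ← comp_apply p s, hps]

lemma apply_extendByOne_of_comp_eq_id (hps : p ∘ₗ s = id) (e : M →ₗ[R] M) (z : F) :
    p (extendByOne s p e z) = e (p z) := by
  simp [extendByOne, ← comp_apply p s, hps]

lemma bijective_of_bijective_extendByOne (hps : p ∘ₗ s = id) {e : M →ₗ[R] M}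
    (h : Function.Bijective (extendByOne s p e)) : Function.Bijective e := by
  have hs : Function.LeftInverse p s := fun x => by rw [← comp_apply p s, hps, id_apply]
  refine ⟨fun a b hab => hs.injective (h.injective ?_), fun x => ?_⟩
  · rw [extendByOne_apply_of_comp_eq_id hps, extendByOne_apply_of_comp_eq_id hps, hab]
  · obtain ⟨z, hz⟩ := h.surjective (s x)
    exact ⟨p z, by rw [← apply_extendByOne_of_comp_eq_id hps, hz, hs]⟩

end Ring

lemma map_toMatrix'_extendByOne_eq_one {R M ι : Type*} [CommRing R] [AddCommGroup M] [Module R M]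
    [Fintype ι] [DecidableEq ι] (I : Ideal R) (s : M →ₗ[R] ι → R) (p : (ι → R) →ₗ[R] M)
    {e : M →ₗ[R] M} (he : ∀ x, e x - x ∈ I • (⊤ : Submodule R M)) :
    (toMatrix' (extendByOne s p e)).map (Ideal.Quotient.mk I) = 1 := by
  have hE : extendByOne s p e = id + s ∘ₗ (e - id) ∘ₗ p := by
    refine LinearMap.ext fun z => ?_
    simp only [extendByOne, add_apply, sub_apply, comp_apply, id_apply, map_sub]
    abel
  ext i j
  have hmem : toMatrix' (s ∘ₗ (e - id) ∘ₗ p) i j ∈ I := by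
    simpa using Submodule.smul_top_le_comap_smul_top I (proj i ∘ₗ s) (he (p (Pi.single j 1)))
  rw [hE, map_add, toMatrix'_id, Matrix.map_apply, Matrix.add_apply, map_add,
    Ideal.Quotient.eq_zero_iff_mem.mpr hmem, add_zero, Matrix.one_apply, Matrix.one_apply]
  split_ifs <;> simp

lemma comp_toLin'_toMatrix'_comp {R M₁ M₂ ι κ : Type*} [CommRing R] [AddCommGroup M₁]
    [Module R M₁] [AddCommGroup M₂] [Module R M₂] [Fintype ι] [DecidableEq ι]
    {s₁ : M₁ →ₗ[R] ι → R} {p₁ : (ι → R) →ₗ[R] M₁} {s₂ : M₂ →ₗ[R] κ → R} {p₂ : (κ → R) →ₗ[R] M₂}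
    (hps₁ : p₁ ∘ₗ s₁ = id) (hps₂ : p₂ ∘ₗ s₂ = id) (f : M₁ →ₗ[R] M₂) :
    p₂ ∘ₗ Matrix.toLin' (toMatrix' (s₂ ∘ₗ f ∘ₗ p₁)) ∘ₗ s₁ = f := by
  rw [Matrix.toLin'_toMatrix']
  change (p₂ ∘ₗ s₂) ∘ₗ f ∘ₗ (p₁ ∘ₗ s₁) = f
  rw [hps₁, hps₂, id_comp, comp_id]

end LinearMap

section PairDet

open LinearMap

variable {R M₁ M₂ ι κ : Type*} [CommRing R] [AddCommGroup M₁] [Module R M₁] [AddCommGroup M₂]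
  [Module R M₂] [Fintype ι] [DecidableEq ι] [Fintype κ] [DecidableEq κ]
  {s₁ : M₁ →ₗ[R] ι → R} {p₁ : (ι → R) →ₗ[R] M₁} {s₂ : M₂ →ₗ[R] κ → R} {p₂ : (κ → R) →ₗ[R] M₂}

lemma toMatrix'_extendByOne_comp (X : Matrix κ ι R) (Y : Matrix ι κ R) :
    toMatrix' (extendByOne s₁ p₁ ((p₁ ∘ₗ Matrix.toLin' Y ∘ₗ s₂) ∘ₗ (p₂ ∘ₗ Matrix.toLin' X ∘ₗ s₁))) =
      toMatrix' (s₁ ∘ₗ p₁) * Y * toMatrix' (s₂ ∘ₗ p₂) * X * toMatrix' (s₁ ∘ₗ p₁) + 1 -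
        toMatrix' (s₁ ∘ₗ p₁) := by
  have : s₁ ∘ₗ ((p₁ ∘ₗ Matrix.toLin' Y ∘ₗ s₂) ∘ₗ (p₂ ∘ₗ Matrix.toLin' X ∘ₗ s₁)) ∘ₗ p₁ =
      (s₁ ∘ₗ p₁) ∘ₗ Matrix.toLin' Y ∘ₗ (s₂ ∘ₗ p₂) ∘ₗ Matrix.toLin' X ∘ₗ (s₁ ∘ₗ p₁) := rfl
  rw [extendByOne, this, map_add, map_sub, toMatrix'_id]
  simp only [toMatrix'_comp, toMatrix'_toLin', Matrix.mul_assoc, add_sub_assoc]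

lemma pairDet_toMatrix' (X : Matrix κ ι R) (Y : Matrix ι κ R) :
    Matrix.pairDet (toMatrix' (s₁ ∘ₗ p₁)) (toMatrix' (s₂ ∘ₗ p₂)) X Y =
      (extendByOne s₁ p₁ ((p₁ ∘ₗ Matrix.toLin' Y ∘ₗ s₂) ∘ₗ (p₂ ∘ₗ Matrix.toLin' X ∘ₗ s₁))).det *
      (extendByOne s₂ p₂ ((p₂ ∘ₗ Matrix.toLin' X ∘ₗ s₁) ∘ₗ (p₁ ∘ₗ Matrix.toLin' Y ∘ₗ s₂))).det := by
  rw [← det_toMatrix', ← det_toMatrix', toMatrix'_extendByOne_comp, toMatrix'_extendByOne_comp,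
    Matrix.pairDet]

theorem nonempty_linearEquiv_of_isUnit_pairDet (hps₁ : p₁ ∘ₗ s₁ = LinearMap.id)
    (hps₂ : p₂ ∘ₗ s₂ = LinearMap.id) {X : Matrix κ ι R} {Y : Matrix ι κ R}
    (h : IsUnit (Matrix.pairDet (toMatrix' (s₁ ∘ₗ p₁)) (toMatrix' (s₂ ∘ₗ p₂)) X Y)) :
    Nonempty (M₁ ≃ₗ[R] M₂) := by
  rw [pairDet_toMatrix', IsUnit.mul_iff, ← isUnit_iff_isUnit_det, ← isUnit_iff_isUnit_det,
    Module.End.isUnit_iff, Module.End.isUnit_iff] at h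
  have hψφ := bijective_of_bijective_extendByOne hps₁ h.1
  have hφψ := bijective_of_bijective_extendByOne hps₂ h.2
  rw [coe_comp] at hψφ hφψ
  exact ⟨.ofBijective _ ⟨hψφ.injective.of_comp, hφψ.surjective.of_comp⟩⟩

lemma mk_pairDet_toMatrix'_eq_one (I : Ideal R) (hps₁ : p₁ ∘ₗ s₁ = LinearMap.id)
    (hps₂ : p₂ ∘ₗ s₂ = LinearMap.id) {f : M₁ →ₗ[R] M₂} {g : M₂ →ₗ[R] M₁}
    (hgf : ∀ x, g (f x) - x ∈ I • (⊤ : Submodule R M₁))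
    (hfg : ∀ y, f (g y) - y ∈ I • (⊤ : Submodule R M₂)) :
    Ideal.Quotient.mk I (Matrix.pairDet (toMatrix' (s₁ ∘ₗ p₁)) (toMatrix' (s₂ ∘ₗ p₂))
      (toMatrix' (s₂ ∘ₗ f ∘ₗ p₁)) (toMatrix' (s₁ ∘ₗ g ∘ₗ p₂))) = 1 := by
  rw [pairDet_toMatrix', comp_toLin'_toMatrix'_comp hps₁ hps₂, comp_toLin'_toMatrix'_comp hps₂ hps₁,
    map_mul, ← det_toMatrix', ← det_toMatrix', RingHom.map_det, RingHom.map_det,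
    RingHom.mapMatrix_apply, RingHom.mapMatrix_apply, map_toMatrix'_extendByOne_eq_one I _ _ hgf,
    map_toMatrix'_extendByOne_eq_one I _ _ hfg, Matrix.det_one, Matrix.det_one, mul_one]

end PairDet

theorem Module.Projective.exists_lift_of_linearEquiv_quotient {R M₁ M₂ : Type*} [Ring R]
    [AddCommGroup M₁] [Module R M₁] [AddCommGroup M₂] [Module R M₂]
    [Module.Projective R M₁] [Module.Projective R M₂] {N₁ : Submodule R M₁} {N₂ : Submodule R M₂}
    (α : (M₁ ⧸ N₁) ≃ₗ[R] (M₂ ⧸ N₂)) :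
    ∃ (f : M₁ →ₗ[R] M₂) (g : M₂ →ₗ[R] M₁), (∀ x, g (f x) - x ∈ N₁) ∧ ∀ y, f (g y) - y ∈ N₂ := by
  obtain ⟨f, hf⟩ := Module.projective_lifting_property N₂.mkQ (α.toLinearMap ∘ₗ N₁.mkQ)
    N₂.mkQ_surjective
  obtain ⟨g, hg⟩ := Module.projective_lifting_property N₁.mkQ (α.symm.toLinearMap ∘ₗ N₂.mkQ)
    N₁.mkQ_surjective
  have hf' : ∀ x, N₂.mkQ (f x) = α (N₁.mkQ x) := LinearMap.congr_fun hf
  have hg' : ∀ y, N₁.mkQ (g y) = α.symm (N₂.mkQ y) := LinearMap.congr_fun hg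
  refine ⟨f, g, fun x => (Submodule.Quotient.eq N₁).mp ?_,
    fun y => (Submodule.Quotient.eq N₂).mp ?_⟩
  · exact (hg' (f x)).trans (by rw [hf', α.symm_apply_apply]; rfl)
  · exact (hf' (g y)).trans (by rw [hg', α.apply_symm_apply]; rfl)

theorem IsLGRing.nonempty_linearEquiv_of_residue {R : Type*} [CommRing R] (hR : IsLGRing R)
    {M₁ M₂ : Type*} [AddCommGroup M₁] [Module R M₁] [AddCommGroup M₂] [Module R M₂]
    [Module.Finite R M₁] [Module.Projective R M₁] [Module.Finite R M₂] [Module.Projective R M₂]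
    (h : ∀ 𝔪 : Ideal R, 𝔪.IsMaximal →
      Nonempty (((R ⧸ 𝔪) ⊗[R] M₁) ≃ₗ[R ⧸ 𝔪] ((R ⧸ 𝔪) ⊗[R] M₂))) :
    Nonempty (M₁ ≃ₗ[R] M₂) := by
  obtain ⟨m₁, p₁, hp₁⟩ := Module.Finite.exists_fin' R M₁
  obtain ⟨m₂, p₂, hp₂⟩ := Module.Finite.exists_fin' R M₂
  obtain ⟨s₁, hs₁⟩ := Module.projective_lifting_property p₁ LinearMap.id hp₁
  obtain ⟨s₂, hs₂⟩ := Module.projective_lifting_property p₂ LinearMap.id hp₂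
  obtain ⟨X, Y, hXY⟩ := hR.exists_isUnit_pairDet (LinearMap.toMatrix' (s₁ ∘ₗ p₁))
    (LinearMap.toMatrix' (s₂ ∘ₗ p₂)) fun 𝔪 h𝔪 => by
      obtain ⟨α⟩ := h 𝔪 h𝔪
      obtain ⟨f, g, hgf, hfg⟩ := Module.Projective.exists_lift_of_linearEquiv_quotient
        ((quotTensorEquivQuotSMul M₁ 𝔪).symm ≪≫ₗ α.restrictScalars R ≪≫ₗ
          quotTensorEquivQuotSMul M₂ 𝔪)
      refine ⟨(LinearMap.toMatrix' (s₂ ∘ₗ f ∘ₗ p₁)).map (Ideal.Quotient.mk 𝔪),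
        (LinearMap.toMatrix' (s₁ ∘ₗ g ∘ₗ p₂)).map (Ideal.Quotient.mk 𝔪), ?_⟩
      rw [← Matrix.map_pairDet, mk_pairDet_toMatrix'_eq_one 𝔪 hs₁ hs₂ hgf hfg]
      exact isUnit_one
  exact nonempty_linearEquiv_of_isUnit_pairDet hs₁ hs₂ hXY

theorem nontrivial_quotient_tensorProduct_of_faithfulSMul {R N : Type*} [CommRing R]
    [AddCommGroup N] [Module R N] [Module.Finite R N] [FaithfulSMul R N] {I : Ideal R}
    (hI : I ≠ ⊤) : Nontrivial ((R ⧸ I) ⊗[R] N) := by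
  suffices (I • ⊤ : Submodule R N) ≠ ⊤ by
    have := Submodule.Quotient.nontrivial_iff.mpr this
    exact (quotTensorEquivQuotSMul N I).toEquiv.nontrivial
  intro htop
  obtain ⟨r, hr1, hr0⟩ := Submodule.exists_sub_one_mem_and_smul_eq_zero_of_fg_of_le_smul I ⊤
    Module.Finite.fg_top htop.ge
  obtain rfl : r = 0 := FaithfulSMul.eq_of_smul_eq_smul fun x => by
    rw [zero_smul]
    exact hr0 x trivial
  exact hI (I.eq_top_iff_one.mpr (by simpa using I.neg_mem hr1))

theorem Module.finrank_baseChange_tensorProduct {R : Type*} (K : Type*) [CommRing R] [Field K]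
    [Algebra R K] (M N : Type*) [AddCommGroup M] [Module R M] [AddCommGroup N] [Module R N]
    [Module.Finite R M] [Module.Finite R N] :
    finrank K (K ⊗[R] (M ⊗[R] N)) = finrank K (K ⊗[R] M) * finrank K (K ⊗[R] N) := by
  rw [← finrank_tensorProduct, ← (AlgebraTensorModule.cancelBaseChange R K K _ N ≪≫ₗ
    AlgebraTensorModule.assoc R R K K M N).finrank_eq]

theorem nonempty_linearEquiv_baseChange_of_tensorProduct {R K M₁ M₂ N : Type*} [CommRing R]
    [Field K] [Algebra R K] [AddCommGroup M₁] [Module R M₁] [AddCommGroup M₂] [Module R M₂]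
    [AddCommGroup N] [Module R N] [Module.Finite R M₁] [Module.Finite R M₂] [Module.Finite R N]
    [Nontrivial (K ⊗[R] N)] (α : (M₁ ⊗[R] N) ≃ₗ[R] (M₂ ⊗[R] N)) :
    Nonempty ((K ⊗[R] M₁) ≃ₗ[K] (K ⊗[R] M₂)) := by
  have := (α.baseChange R K _ _).finrank_eq
  rw [Module.finrank_baseChange_tensorProduct, Module.finrank_baseChange_tensorProduct] at this
  exact FiniteDimensional.nonempty_linearEquiv_of_finrank_eq
    (Nat.eq_of_mul_eq_mul_right Module.finrank_pos this)

theorem IsLGRing.nonempty_linearEquiv_of_tensorProduct {R : Type*} [CommRing R]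
    (hR : IsLGRing R) {M₁ M₂ N : Type*} [AddCommGroup M₁] [Module R M₁] [AddCommGroup M₂]
    [Module R M₂] [AddCommGroup N] [Module R N] [Module.Finite R M₁] [Module.Projective R M₁]
    [Module.Finite R M₂] [Module.Projective R M₂] [Module.Finite R N] [FaithfulSMul R N]
    (α : (M₁ ⊗[R] N) ≃ₗ[R] (M₂ ⊗[R] N)) : Nonempty (M₁ ≃ₗ[R] M₂) :=
  hR.nonempty_linearEquiv_of_residue fun 𝔪 h𝔪 =>
    letI := Ideal.Quotient.field 𝔪
    have := nontrivial_quotient_tensorProduct_of_faithfulSMul (N := N) h𝔪.ne_top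
    nonempty_linearEquiv_baseChange_of_tensorProduct α

theorem lg_ring_tensor_cancellation_general
    {R : Type*} [CommRing R] (hR : IsLGRing R)
    (M₁ M₂ N : Type*) [AddCommGroup M₁] [Module R M₁] [AddCommGroup M₂] [Module R M₂]
    [AddCommGroup N] [Module R N]
    [Module.Finite R M₁] [Module.Projective R M₁]
    [Module.Finite R M₂] [Module.Projective R M₂]
    [Module.Finite R N] [FaithfulSMul R N] :
    (Nonempty ((M₁ ⊗[R] N) ≃ₗ[R] (M₂ ⊗[R] N)) → Nonempty (M₁ ≃ₗ[R] M₂)) ∧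
    (∀ n : ℕ, 1 ≤ n →
      Nonempty ((Fin n → M₁) ≃ₗ[R] (Fin n → M₂)) → Nonempty (M₁ ≃ₗ[R] M₂)) := by
  refine ⟨fun ⟨α⟩ => hR.nonempty_linearEquiv_of_tensorProduct α, fun n hn ⟨α⟩ => ?_⟩
  have : Nonempty (Fin n) := ⟨⟨0, hn⟩⟩
  exact hR.nonempty_linearEquiv_of_tensorProduct (N := Fin n → R)
    (piScalarRight R R M₁ (Fin n) ≪≫ₗ α ≪≫ₗ (piScalarRight R R M₂ (Fin n)).symm)

/-- (Cancellation of modules.)  Over an LG-ring `R`, if `M₁`, `M₂` are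
finitely generated projective modules and `N` is a faithfully projective module, then
`M₁ ⊗ N ≅ M₂ ⊗ N` implies `M₁ ≅ M₂`; in particular `M₁^{⊕n} ≅ M₂^{⊕n}` (`n ≥ 1`)
implies `M₁ ≅ M₂`. -/
theorem lg_ring_tensor_cancellation
    {R : Type*} [CommRing R] (hR : IsLGRing R)
    (M₁ M₂ N : Type*) [AddCommGroup M₁] [Module R M₁] [AddCommGroup M₂] [Module R M₂]
    [AddCommGroup N] [Module R N]
    [Module.Finite R M₁] [Module.Projective R M₁]
    [Module.Finite R M₂] [Module.Projective R M₂]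
    [Module.Finite R N] [Module.Projective R N] [FaithfulSMul R N] :
    (Nonempty ((M₁ ⊗[R] N) ≃ₗ[R] (M₂ ⊗[R] N)) → Nonempty (M₁ ≃ₗ[R] M₂)) ∧
    (∀ n : ℕ, 1 ≤ n →
      Nonempty ((Fin n → M₁) ≃ₗ[R] (Fin n → M₂)) → Nonempty (M₁ ≃ₗ[R] M₂)) :=
  lg_ring_tensor_cancellation_general hR M₁ M₂ N
end
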